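/- Let Δ be a metric, S_j a cluster of m points with center x* and average radius r = Δ(S_j, x*)/m, and C a finite set of centers. If a point p ∈ S_j satisfies Δ(p, C) / Δ(S_j, C) ≤ (ε/2)/m for some 0 < ε < 2, then Δ(p, C) ≤ (ε/2)/(1 − ε/2) · (r + Δ(p, x*)). -/

import Mathlib

/-- Distance from a point to its nearest center in `C`. -/
noncomputable def ptCost {X : Type*} [MetricSpace X] (p : X) (C : Finset X) : ℝ :=
  sInf ((fun c => dist p c) '' (C : Set X))

/-- Clustering cost of a multiset of points with center set `C`. -/
noncomputable def clCost {X : Type*} [MetricSpace X] (S : Multiset X) (C : Finset X) : ℝ :=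
  (S.map fun x => ptCost x C).sum

/-!
Let `c` be the center of `C` nearest to `p`. Every `q ∈ S_j` is within `Δ(q, x*) + Δ(x*, p) + Δ(p, c)`
of `c`, so `Δ(S_j, C) ≤ m r + m (Δ(p, x*) + Δ(p, C))`. The hypothesis turns this into
`Δ(p, C) ≤ (ε/2) (r + Δ(p, x*) + Δ(p, C))`, and `ε/2 < 1` lets us solve for `Δ(p, C)`.
-/

section Cost

variable {X : Type*} [MetricSpace X]

lemma ptCost_nonneg (p : X) (C : Finset X) : 0 ≤ ptCost p C :=
  Real.sInf_nonneg <| by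
    rintro _ ⟨c, _, rfl⟩
    exact dist_nonneg

lemma ptCost_le_dist (p : X) {C : Finset X} {c : X} (hc : c ∈ C) : ptCost p C ≤ dist p c := by
  refine csInf_le ⟨0, ?_⟩ ⟨c, hc, rfl⟩
  rintro _ ⟨d, _, rfl⟩
  exact dist_nonneg

lemma exists_ptCost_eq_dist (p : X) {C : Finset X} (hC : C.Nonempty) :
    ∃ c ∈ C, ptCost p C = dist p c := by
  obtain ⟨c, hc, hcost⟩ := (((Finset.coe_nonempty.mpr hC).image fun c => dist p c).csInf_mem
    (C.finite_toSet.image _) : ptCost p C ∈ _)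
  exact ⟨c, hc, hcost.symm⟩

lemma ptCost_le_dist_add_ptCost (q p : X) {C : Finset X} (hC : C.Nonempty) :
    ptCost q C ≤ dist q p + ptCost p C := by
  obtain ⟨c, hc, hpc⟩ := exists_ptCost_eq_dist p hC
  rw [hpc]
  exact (ptCost_le_dist q hc).trans (dist_triangle q p c)

lemma ptCost_le_clCost {S : Multiset X} {p : X} (hp : p ∈ S) (C : Finset X) :
    ptCost p C ≤ clCost S C :=
  Multiset.single_le_sum (fun _ hx => by
    obtain ⟨q, _, rfl⟩ := Multiset.mem_map.mp hx
    exact ptCost_nonneg q C) _ (Multiset.mem_map_of_mem _ hp)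

lemma clCost_le_sum_dist_add_card_mul (S : Multiset X) (x : X) {C : Finset X}
    (hC : C.Nonempty) :
    clCost S C ≤ (S.map fun q => dist q x).sum + Multiset.card S * ptCost x C := by
  calc clCost S C ≤ (S.map fun q => dist q x + ptCost x C).sum :=
        Multiset.sum_map_le_sum_map _ _ fun q _ => ptCost_le_dist_add_ptCost q x hC
    _ = (S.map fun q => dist q x).sum + Multiset.card S * ptCost x C := by
        rw [Multiset.sum_map_add, Multiset.map_const', Multiset.sum_replicate, nsmul_eq_mul]

lemma ptCost_le_mul_clCost_div_card {S : Multiset X} {p : X} (hp : p ∈ S) {C : Finset X}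
    {a : ℝ} (h : ptCost p C / clCost S C ≤ a / Multiset.card S) :
    ptCost p C ≤ a * (clCost S C / Multiset.card S) := by
  have hle := ptCost_le_clCost hp C
  rcases (ptCost_nonneg p C).trans hle |>.eq_or_lt with hzero | hpos
  · -- `h` is vacuous here (`x / 0 = 0`), but `ptCost p C ≤ clCost S C = 0`.
    rw [← hzero] at hle ⊢
    simpa using hle
  · have hm : (0 : ℝ) < Multiset.card S := by
      exact_mod_cast Multiset.card_pos_iff_exists_mem.mpr ⟨p, hp⟩
    rw [div_le_div_iff₀ hpos hm] at h
    rw [mul_div_assoc', le_div_iff₀ hm]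
    linarith

end Cost

lemma le_div_one_sub_mul_of_le_mul_add_self {D a r : ℝ} (ha : a < 1) (h : D ≤ a * (r + D)) :
    D ≤ a / (1 - a) * r := by
  rw [div_mul_eq_mul_div, le_div_iff₀ (by linarith)]
  linarith

/-- If `Δ(p, C)/Δ(S_j, C) ≤ (ε/2)/m`, then
`Δ(p, C) ≤ (ε/2)/(1-ε/2) · (r + Δ(p, x*))` where `r = Δ(S_j, x*)/m`. -/
theorem stmt_16 {X : Type*} [MetricSpace X] (Sj : Multiset X) (xstar : X)
    (C : Finset X) (hC : C.Nonempty) (ε : ℝ) (hε0 : 0 < ε) (hε2 : ε < 2)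
    (p : X) (hp : p ∈ Sj)
    (hyp : ptCost p C / clCost Sj C ≤ (ε / 2) / (Multiset.card Sj : ℝ)) :
    ptCost p C ≤ (ε / 2) / (1 - ε / 2) *
      ((Sj.map fun q => dist q xstar).sum / (Multiset.card Sj : ℝ) + dist p xstar) := by
  set m : ℝ := (Multiset.card Sj : ℝ)
  set R := (Sj.map fun q => dist q xstar).sum
  have hm : 0 < m := Nat.cast_pos.mpr (Multiset.card_pos_iff_exists_mem.mpr ⟨p, hp⟩)
  have havg : clCost Sj C / m ≤ R / m + (dist p xstar + ptCost p C) := by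
    rw [div_le_iff₀ hm, add_mul, div_mul_cancel₀ _ hm.ne']
    calc clCost Sj C ≤ R + m * ptCost xstar C := clCost_le_sum_dist_add_card_mul Sj xstar hC
      _ ≤ R + m * (dist xstar p + ptCost p C) := by
          gcongr
          exact ptCost_le_dist_add_ptCost xstar p hC
      _ = R + (dist p xstar + ptCost p C) * m := by rw [dist_comm]; ring
  apply le_div_one_sub_mul_of_le_mul_add_self (by linarith)
  calc ptCost p C ≤ ε / 2 * (clCost Sj C / m) :=
        ptCost_le_mul_clCost_div_card hp hyp
    _ ≤ ε / 2 * (R / m + (dist p xstar + ptCost p C)) := by gcongr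
    _ = ε / 2 * (R / m + dist p xstar + ptCost p C) := by ring
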